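/- (Proposition 3, SER with a δ-covering codebook.) Let t ≥ 1. There exists δ₀ > 0 (depending only on t) such that for all δ ∈ (0, δ₀) and all P > 0 the following holds: if m : ℂ^t → ℂ^t is a measurable map with ‖m(h)‖ = 1 and |⟨m(h), h⟩|² ≥ (1 − δ)·‖h‖² for all h, then ∫ Q(√(2·|⟨m(h), h⟩|²·P)) dμ(h) ≤ (1 + 2tδ)·∫ Q(√(2·‖h‖²·P)) dμ(h). -/

import Mathlib

open MeasureTheory

noncomputable instance (t : ℕ) : MeasureSpace (EuclideanSpace ℂ (Fin t)) where
  volume := (volume : Measure (Fin t → ℂ)).map (WithLp.toLp 2)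

/-- The Gaussian tail function `Q(x) = (1/√(2π)) ∫_x^∞ exp(-u²/2) du`. -/
noncomputable def gaussianQ (x : ℝ) : ℝ :=
  (Real.sqrt (2 * Real.pi))⁻¹ * ∫ u in Set.Ioi x, Real.exp (-(u ^ 2) / 2)

/-- The standard complex Gaussian measure `CN(0, I_t)` on `ℂ^t`, with density
`h ↦ π^{-t} exp(-‖h‖²)` with respect to Lebesgue measure. -/
noncomputable def stdCGauss (t : ℕ) : Measure (EuclideanSpace ℂ (Fin t)) :=
  volume.withDensity fun h => ENNReal.ofReal ((Real.pi ^ t)⁻¹ * Real.exp (-‖h‖ ^ 2))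

/-!
The SNR bound and the monotonicity of `Q` reduce the left-hand side to
`∫ Q(√(2(1-δ)‖h‖²P)) dμ`. Substituting `h = x / √(1-δ)` turns this into `(1-δ)^{-t}` times an
integral against the density `π^{-t} exp(-‖x‖²/(1-δ))`, which is dominated by the Gaussian
density itself. Finally `(1-δ)^{-t} ≤ 1 + 2tδ` by Bernoulli's inequality as soon as `2tδ ≤ 1`.
-/

open Module
open scoped ENNReal

theorem gaussianQ_nonneg (x : ℝ) : 0 ≤ gaussianQ x :=
  mul_nonneg (by positivity) (setIntegral_nonneg measurableSet_Ioi fun u _ => (Real.exp_pos _).le)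

theorem gaussianQ_antitone : Antitone gaussianQ := by
  have hint : Integrable fun u : ℝ => Real.exp (-(u ^ 2) / 2) := by
    simpa [neg_div, div_eq_inv_mul] using integrable_exp_neg_mul_sq (b := 2⁻¹) (by norm_num)
  intro x y hxy
  refine mul_le_mul_of_nonneg_left ?_ (by positivity)
  exact setIntegral_mono_set hint.integrableOn (ae_of_all _ fun u => (Real.exp_pos _).le)
    (ae_of_all _ fun u (hu : y < u) => hxy.trans_lt hu)

@[fun_prop]
theorem measurable_gaussianQ : Measurable gaussianQ :=
  gaussianQ_antitone.measurable

theorem integrable_gaussianQ_sqrt {α : Type*} [MeasurableSpace α] {μ : Measure α}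
    [IsFiniteMeasure μ] {φ : α → ℝ} (hφ : Measurable φ) :
    Integrable (fun a => gaussianQ (Real.sqrt (φ a))) μ := by
  refine Integrable.of_bound (measurable_gaussianQ.comp hφ.sqrt).aestronglyMeasurable
    (gaussianQ 0) (ae_of_all _ fun a => ?_)
  rw [Real.norm_of_nonneg (gaussianQ_nonneg _)]
  exact gaussianQ_antitone (Real.sqrt_nonneg _)

theorem inv_one_sub_pow_le_one_add_two_mul {δ : ℝ} (t : ℕ) (hδ0 : 0 ≤ δ) (hδ1 : δ < 1)
    (htδ : 2 * t * δ ≤ 1) : (1 - δ)⁻¹ ^ t ≤ 1 + 2 * t * δ := by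
  have bernoulli : 1 - t * δ ≤ (1 - δ) ^ t := by
    simpa [sub_eq_add_neg] using one_add_mul_le_pow (by linarith : (-2 : ℝ) ≤ -δ) t
  rw [inv_pow, inv_le_iff_one_le_mul₀ (pow_pos (by linarith) t)]
  have htδ0 : 0 ≤ (t : ℝ) * δ := by positivity
  nlinarith [mul_nonneg htδ0 (by linarith : (0 : ℝ) ≤ 1 - 2 * t * δ),
    mul_le_mul_of_nonneg_left bernoulli (by linarith : (0 : ℝ) ≤ 1 + 2 * t * δ)]

section AddHaar

variable {E : Type*} [NormedAddCommGroup E] [NormedSpace ℝ E] [FiniteDimensional ℝ E]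
  [MeasurableSpace E] [BorelSpace E] (μ : Measure E) [μ.IsAddHaarMeasure]

theorem MeasureTheory.Measure.lintegral_comp_smul (f : E → ℝ≥0∞) {r : ℝ} (hr : r ≠ 0) :
    ∫⁻ x, f (r • x) ∂μ = ENNReal.ofReal |(r ^ finrank ℝ E)⁻¹| * ∫⁻ x, f x ∂μ := by
  rw [← smul_eq_mul, ← lintegral_smul_measure, ← map_addHaar_smul μ hr]
  exact (lintegral_map_equiv f (Homeomorph.smulOfNeZero r hr).toMeasurableEquiv).symm

theorem lintegral_mul_comp_smul_le {ρ : E → ℝ≥0∞} (f : E → ℝ≥0∞) {s : ℝ} (hs : 0 < s)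
    (hρ : ∀ x, ρ (s⁻¹ • x) ≤ ρ x) :
    ∫⁻ x, ρ x * f (s • x) ∂μ ≤ ENNReal.ofReal (s⁻¹ ^ finrank ℝ E) * ∫⁻ x, ρ x * f x ∂μ :=
  calc ∫⁻ x, ρ x * f (s • x) ∂μ = ∫⁻ x, ρ (s⁻¹ • s • x) * f (s • x) ∂μ := by
        simp [smul_smul, inv_mul_cancel₀ hs.ne']
    _ = ENNReal.ofReal (s⁻¹ ^ finrank ℝ E) * ∫⁻ y, ρ (s⁻¹ • y) * f y ∂μ := by
        rw [μ.lintegral_comp_smul (fun y => ρ (s⁻¹ • y) * f y) hs.ne', inv_pow,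
          abs_of_pos (by positivity)]
    _ ≤ ENNReal.ofReal (s⁻¹ ^ finrank ℝ E) * ∫⁻ x, ρ x * f x ∂μ := by
        gcongr with x
        exact hρ x

end AddHaar

theorem integrable_exp_neg_mul_sq_norm_of_isAddHaarMeasure {V : Type*} [NormedAddCommGroup V]
    [InnerProductSpace ℝ V] [FiniteDimensional ℝ V] [MeasurableSpace V] [BorelSpace V]
    (μ : Measure V) [μ.IsAddHaarMeasure] {b : ℝ} (hb : 0 < b) :
    Integrable (fun v => Real.exp (-b * ‖v‖ ^ 2)) μ := by
  rw [μ.isAddLeftInvariant_eq_smul volume]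
  refine Integrable.smul_measure ?_ ENNReal.coe_ne_top
  have hc := GaussianFourier.integrable_cexp_neg_mul_sq_norm_add (V := V) (b := b) (by simpa) 0 0
  simpa [Complex.norm_exp, ← Complex.ofReal_pow] using hc.norm

section stdCGauss

variable (t : ℕ)

instance : (volume : Measure (EuclideanSpace ℂ (Fin t))).IsAddHaarMeasure :=
  (PiLp.continuousLinearEquiv 2 ℂ fun _ : Fin t => ℂ).symm.isAddHaarMeasure_map volume

instance : IsFiniteMeasure (stdCGauss t) := by
  refine isFiniteMeasure_withDensity_ofReal ?_
  have := (integrable_exp_neg_mul_sq_norm_of_isAddHaarMeasure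
    (volume : Measure (EuclideanSpace ℂ (Fin t))) one_pos).const_mul (Real.pi ^ t)⁻¹
  simpa using this.hasFiniteIntegral

theorem finrank_real_euclideanSpace_complex : finrank ℝ (EuclideanSpace ℂ (Fin t)) = 2 * t := by
  rw [← finrank_mul_finrank ℝ ℂ, Complex.finrank_real_complex, finrank_euclideanSpace,
    Fintype.card_fin]

theorem lintegral_stdCGauss_comp_smul_le {f : EuclideanSpace ℂ (Fin t) → ℝ≥0∞}
    (hf : Measurable f) {s : ℝ} (hs0 : 0 < s) (hs1 : s ≤ 1) :
    ∫⁻ h, f (s • h) ∂stdCGauss t ≤ ENNReal.ofReal (s⁻¹ ^ (2 * t)) * ∫⁻ h, f h ∂stdCGauss t := by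
  have hρ : Measurable fun h : EuclideanSpace ℂ (Fin t) =>
      ENNReal.ofReal ((Real.pi ^ t)⁻¹ * Real.exp (-‖h‖ ^ 2)) := by fun_prop
  have hfs : Measurable fun h => f (s • h) := by fun_prop
  rw [stdCGauss, lintegral_withDensity_eq_lintegral_mul _ hρ hfs,
    lintegral_withDensity_eq_lintegral_mul _ hρ hf,
    ← finrank_real_euclideanSpace_complex]
  refine lintegral_mul_comp_smul_le volume f hs0 fun h => ?_
  have hnorm : ‖h‖ ≤ ‖s⁻¹ • h‖ := by
    rw [norm_smul, Real.norm_of_nonneg (by positivity)]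
    exact le_mul_of_one_le_left (norm_nonneg h) (one_le_inv₀ hs0 |>.mpr hs1)
  gcongr

theorem integral_stdCGauss_comp_smul_le {f : EuclideanSpace ℂ (Fin t) → ℝ} (hf : Measurable f)
    (hf0 : 0 ≤ f) (hfi : Integrable f (stdCGauss t)) {s : ℝ} (hs0 : 0 < s) (hs1 : s ≤ 1) :
    ∫ h, f (s • h) ∂stdCGauss t ≤ s⁻¹ ^ (2 * t) * ∫ h, f h ∂stdCGauss t := by
  rw [integral_eq_lintegral_of_nonneg_ae (ae_of_all _ fun h => hf0 (s • h))
      (hf.comp (measurable_const_smul s)).aestronglyMeasurable,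
    integral_eq_lintegral_of_nonneg_ae (ae_of_all _ hf0) hf.aestronglyMeasurable,
    ← ENNReal.toReal_ofReal (by positivity : 0 ≤ s⁻¹ ^ (2 * t)), ← ENNReal.toReal_mul]
  exact ENNReal.toReal_mono (ENNReal.mul_ne_top ENNReal.ofReal_ne_top hfi.lintegral_lt_top.ne)
    (lintegral_stdCGauss_comp_smul_le t (by fun_prop) hs0 hs1)

end stdCGauss

theorem ser_with_delta_covering_general (t : ℕ) :
    ∃ δ₀ : ℝ, 0 < δ₀ ∧ ∀ δ : ℝ, 0 < δ → δ < δ₀ → ∀ P : ℝ, 0 < P →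
      ∀ m : EuclideanSpace ℂ (Fin t) → EuclideanSpace ℂ (Fin t),
        Measurable m →
        (∀ h, ‖m h‖ = 1) →
        (∀ h, (1 - δ) * ‖h‖ ^ 2 ≤ ‖(inner ℂ (m h) h : ℂ)‖ ^ 2) →
        ∫ h, gaussianQ (Real.sqrt (2 * ‖(inner ℂ (m h) h : ℂ)‖ ^ 2 * P)) ∂(stdCGauss t)
          ≤ (1 + 2 * t * δ)
            * ∫ h, gaussianQ (Real.sqrt (2 * ‖h‖ ^ 2 * P)) ∂(stdCGauss t) := by
  refine ⟨(2 * t + 1)⁻¹, by positivity, fun δ hδ0 hδ P _ m _ _ hsnr => ?_⟩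
  have hδ' : (2 * t + 1) * δ < 1 := by rwa [← lt_inv_mul_iff₀ (by positivity), mul_one]
  have h2tδ : 0 ≤ 2 * (t : ℝ) * δ := by positivity
  set f : EuclideanSpace ℂ (Fin t) → ℝ := fun h => gaussianQ (Real.sqrt (2 * ‖h‖ ^ 2 * P))
  set s := Real.sqrt (1 - δ)
  have hs0 : 0 < s := Real.sqrt_pos.mpr (by linarith)
  have hs1 : s ≤ 1 := Real.sqrt_le_one.mpr (by linarith)
  have hs_sq : s ^ 2 = 1 - δ := Real.sq_sqrt (by linarith)
  have hf_smul (h) : f (s • h) = gaussianQ (Real.sqrt (2 * ((1 - δ) * ‖h‖ ^ 2) * P)) := by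
    simp only [f, norm_smul, mul_pow, Real.norm_eq_abs, sq_abs, hs_sq]
  have hf_int : Integrable f (stdCGauss t) := integrable_gaussianQ_sqrt (by fun_prop)
  have hfs_int : Integrable (fun h => f (s • h)) (stdCGauss t) :=
    integrable_gaussianQ_sqrt (by fun_prop)
  calc ∫ h, gaussianQ (Real.sqrt (2 * ‖(inner ℂ (m h) h : ℂ)‖ ^ 2 * P)) ∂(stdCGauss t)
      ≤ ∫ h, f (s • h) ∂stdCGauss t := by
        refine integral_mono_of_nonneg (ae_of_all _ fun h => gaussianQ_nonneg _) hfs_int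
          (ae_of_all _ fun h => ?_)
        simp only [hf_smul]
        exact gaussianQ_antitone (Real.sqrt_le_sqrt (by gcongr; exact hsnr h))
    _ ≤ s⁻¹ ^ (2 * t) * ∫ h, f h ∂stdCGauss t :=
        integral_stdCGauss_comp_smul_le t (by fun_prop) (fun h => gaussianQ_nonneg _) hf_int
          hs0 hs1
    _ = (1 - δ)⁻¹ ^ t * ∫ h, f h ∂stdCGauss t := by rw [pow_mul, inv_pow, hs_sq]
    _ ≤ (1 + 2 * t * δ) * ∫ h, f h ∂stdCGauss t := by
        gcongr
        · exact integral_nonneg fun h => gaussianQ_nonneg _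
        · exact inv_one_sub_pow_le_one_add_two_mul t hδ0.le (by linarith) (by linarith)

/-- Proposition 3: if a (measurable) beamforming map always attains SNR at least
`(1-δ)‖h‖² P`, then its SER is at most `(1 + 2tδ)` times the full-CSIT SER, for all
sufficiently small `δ` and all `P > 0`. -/
theorem ser_with_delta_covering (t : ℕ) (ht : 1 ≤ t) :
    ∃ δ₀ : ℝ, 0 < δ₀ ∧ ∀ δ : ℝ, 0 < δ → δ < δ₀ → ∀ P : ℝ, 0 < P →
      ∀ m : EuclideanSpace ℂ (Fin t) → EuclideanSpace ℂ (Fin t),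
        Measurable m →
        (∀ h, ‖m h‖ = 1) →
        (∀ h, (1 - δ) * ‖h‖ ^ 2 ≤ ‖(inner ℂ (m h) h : ℂ)‖ ^ 2) →
        ∫ h, gaussianQ (Real.sqrt (2 * ‖(inner ℂ (m h) h : ℂ)‖ ^ 2 * P)) ∂(stdCGauss t)
          ≤ (1 + 2 * t * δ)
            * ∫ h, gaussianQ (Real.sqrt (2 * ‖h‖ ^ 2 * P)) ∂(stdCGauss t) :=
  ser_with_delta_covering_general t
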